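/- In the location model, the quadratic-penalty estimator minimizing Σ_{i∈S}(Y_i−μ)² + Σ_{i∈B}(Y_i−μ−δ)² + λδ² has μ̂ = ωȲ_S + (1−ω)Ȳ_B with ω = (nN + nλ)/(nN + nλ + Nλ); as λ ranges over [0,∞], ω decreases from 1 to n/(n+N), and given any ω ∈ (n/(n+N), 1], the corresponding penalty is λ = nN(1−ω)/(Nω − n(1−ω)). -/

import Mathlib

open Filter BigOperators

/-!
Splitting each sample's residual sum of squares around its mean reduces the criterion to the
two-variable quadratic `n (Ȳ_S - μ)² + N (Ȳ_B - μ - δ)² + λ δ²`, whose unique stationary point is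
`μ̂ = Ȳ_S + Nλ (Ȳ_B - Ȳ_S) / D`, `δ̂ = nN (Ȳ_B - Ȳ_S) / D` with `D = nN + nλ + Nλ`. Since the
quadratic is convex, the stationary point is its minimum. The properties of the weight
`ω(λ) = n (N + λ) / D` are elementary: `1 - ω(λ) = Nλ / D` vanishes at `λ = 0`, increases with `λ`
and tends to `N / (n + N)`, and `ω(λ) = ω` is a linear equation in `λ`.
-/

theorem Finset.sum_sub_sq_eq_sum_sub_mean_sq_add {ι : Type*} [Fintype ι] (Y : ι → ℝ) (a : ℝ) :
    ∑ i, (Y i - a) ^ 2 =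
      ∑ i, (Y i - (∑ j, Y j) / Fintype.card ι) ^ 2
        + Fintype.card ι * ((∑ j, Y j) / Fintype.card ι - a) ^ 2 := by
  set k : ℝ := (Fintype.card ι : ℝ)
  set m : ℝ := (∑ j, Y j) / k
  have hsum : ∑ j, Y j = k * m := by
    rcases isEmpty_or_nonempty ι with hι | hι
    · simp [k]
    · rw [mul_div_cancel₀ _ (by positivity)]
  calc ∑ i, (Y i - a) ^ 2
      = ∑ i, ((Y i - m) ^ 2 + ((m - a) * (2 * Y i) - (m - a) * (a + m))) :=
        Finset.sum_congr rfl fun i _ => by ring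
    _ = ∑ i, (Y i - m) ^ 2 + ((m - a) * (2 * (k * m)) - k * ((m - a) * (a + m))) := by
        rw [Finset.sum_add_distrib, Finset.sum_sub_distrib, ← Finset.mul_sum, ← Finset.mul_sum,
          hsum, Finset.sum_const, Finset.card_univ, nsmul_eq_mul]
    _ = ∑ i, (Y i - m) ^ 2 + k * (m - a) ^ 2 := by ring

namespace LocationPenalty

variable {n N : ℝ}

noncomputable def weight (n N lam : ℝ) : ℝ := (n * N + n * lam) / (n * N + n * lam + N * lam)

theorem one_sub_weight (hn : 0 < n) (hN : 0 < N) {lam : ℝ} (hlam : 0 ≤ lam) :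
    1 - weight n N lam = N * lam / (n * N + n * lam + N * lam) := by
  have hD : 0 < n * N + n * lam + N * lam := by positivity
  rw [weight, one_sub_div hD.ne']
  ring

theorem criterion_le_of_stationary (hn : 0 ≤ n) (hN : 0 ≤ N) {lam : ℝ} (hlam : 0 ≤ lam)
    {x y μh δh : ℝ} (stat_μ : n * (x - μh) + N * (y - μh - δh) = 0)
    (stat_δ : N * (y - μh - δh) = lam * δh) (μ δ : ℝ) :
    n * (x - μh) ^ 2 + N * (y - μh - δh) ^ 2 + lam * δh ^ 2
      ≤ n * (x - μ) ^ 2 + N * (y - μ - δ) ^ 2 + lam * δ ^ 2 := by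
  have excess : n * (x - μ) ^ 2 + N * (y - μ - δ) ^ 2 + lam * δ ^ 2
      - (n * (x - μh) ^ 2 + N * (y - μh - δh) ^ 2 + lam * δh ^ 2)
      = n * (μ - μh) ^ 2 + N * (μ + δ - μh - δh) ^ 2 + lam * (δ - δh) ^ 2 := by
    linear_combination (-2 * (μ - μh)) * stat_μ - (2 * (δ - δh)) * stat_δ
  have : 0 ≤ n * (μ - μh) ^ 2 + N * (μ + δ - μh - δh) ^ 2 + lam * (δ - δh) ^ 2 := by positivity
  linarith

theorem stationary_weightedMean (hn : 0 < n) (hN : 0 < N) {lam : ℝ} (hlam : 0 ≤ lam) (x y : ℝ) :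
    let μh := weight n N lam * x + (1 - weight n N lam) * y
    let δh := n * N * (y - x) / (n * N + n * lam + N * lam)
    (n * (x - μh) + N * (y - μh - δh) = 0) ∧ N * (y - μh - δh) = lam * δh := by
  have hD : 0 < n * N + n * lam + N * lam := by positivity
  have hμh : weight n N lam * x + (1 - weight n N lam) * y
      = x + N * lam * (y - x) / (n * N + n * lam + N * lam) := by
    rw [show weight n N lam = 1 - (1 - weight n N lam) by ring, one_sub_weight hn hN hlam]
    ring
  simp only [hμh]
  constructor <;> field_simp <;> ring

theorem weight_zero (hn : n ≠ 0) (hN : N ≠ 0) : weight n N 0 = 1 := by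
  simp [weight, hn, hN]

theorem strictAntiOn_weight (hn : 0 < n) (hN : 0 < N) : StrictAntiOn (weight n N) (Set.Ici 0) := by
  intro a (ha : 0 ≤ a) b (hb : 0 ≤ b) hab
  have hDa : 0 < n * N + n * a + N * a := by positivity
  have hDb : 0 < n * N + n * b + N * b := by positivity
  rw [weight, weight, div_lt_div_iff₀ hDb hDa]
  nlinarith [mul_pos (mul_pos hn (mul_pos hN hN)) (sub_pos.mpr hab)]

theorem tendsto_weight_atTop (hnN : n + N ≠ 0) :
    Tendsto (weight n N) atTop (nhds (n / (n + N))) := by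
  have hinv : Tendsto (fun lam : ℝ => n * N / lam) atTop (nhds 0) :=
    tendsto_const_nhds.div_atTop tendsto_id
  have hlim := (hinv.add_const n).div ((hinv.add_const n).add_const N) (by rwa [zero_add])
  rw [zero_add] at hlim
  refine hlim.congr' ?_
  filter_upwards [eventually_ne_atTop (0 : ℝ)] with lam hlam
  rw [Pi.div_apply, weight, ← mul_div_mul_right _ _ hlam]
  congr 1 <;> field_simp

theorem weight_eq (hn : n ≠ 0) (hN : N ≠ 0) {ω : ℝ} (hω : N * ω - n * (1 - ω) ≠ 0) :
    weight n N (n * N * (1 - ω) / (N * ω - n * (1 - ω))) = ω := by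
  set lam := n * N * (1 - ω) / (N * ω - n * (1 - ω))
  have hD : n * N + n * lam + N * lam = n * N ^ 2 / (N * ω - n * (1 - ω)) := by
    simp only [lam]; field_simp; ring
  rw [weight, hD, div_eq_iff (by positivity)]
  simp only [lam]; field_simp; ring

end LocationPenalty

open LocationPenalty in
/-- Location model with quadratic penalty `λδ²`: the minimizer has
`μ̂ = ω Ȳ_S + (1−ω) Ȳ_B` with `ω = (nN + nλ)/(nN + nλ + Nλ)`; as `λ` ranges
over `[0,∞]`, `ω` decreases strictly from `1` to `n/(n+N)`, and for any
`ω ∈ (n/(n+N), 1]` the corresponding penalty is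
`λ = nN(1−ω)/(Nω − n(1−ω))`. -/
theorem stmt19 {n N : ℕ} (hn : 0 < n) (hN : 0 < N)
    (YS : Fin n → ℝ) (YB : Fin N → ℝ) :
    let mS := (∑ i, YS i) / (n : ℝ)
    let mB := (∑ i, YB i) / (N : ℝ)
    let w : ℝ → ℝ := fun lam =>
      ((n : ℝ) * N + n * lam) / ((n : ℝ) * N + n * lam + N * lam)
    (∀ lam : ℝ, 0 ≤ lam → ∃ δh : ℝ, ∀ μ δ : ℝ,
        (∑ i, (YS i - (w lam * mS + (1 - w lam) * mB))^2)
          + (∑ i, (YB i - (w lam * mS + (1 - w lam) * mB) - δh)^2)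
          + lam * δh^2
        ≤ (∑ i, (YS i - μ)^2) + (∑ i, (YB i - μ - δ)^2) + lam * δ^2)
    ∧ StrictAntiOn w (Set.Ici 0)
    ∧ w 0 = 1
    ∧ Tendsto w atTop (nhds ((n : ℝ) / (n + N)))
    ∧ (∀ ω : ℝ, (n : ℝ) / (n + N) < ω → ω ≤ 1 →
        w ((n : ℝ) * N * (1 - ω) / ((N : ℝ) * ω - n * (1 - ω))) = ω) := by
  intro mS mB w
  have hnr : (0 : ℝ) < n := Nat.cast_pos.mpr hn
  have hNr : (0 : ℝ) < N := Nat.cast_pos.mpr hN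
  have split {k : ℕ} (Y : Fin k → ℝ) (a : ℝ) :
      ∑ i, (Y i - a) ^ 2 = ∑ i, (Y i - (∑ j, Y j) / k) ^ 2 + k * ((∑ j, Y j) / k - a) ^ 2 := by
    simpa using Finset.sum_sub_sq_eq_sum_sub_mean_sq_add Y a
  have reduce (lam μ δ : ℝ) :
      ∑ i, (YS i - μ) ^ 2 + ∑ i, (YB i - μ - δ) ^ 2 + lam * δ ^ 2
        = ∑ i, (YS i - mS) ^ 2 + ∑ i, (YB i - mB) ^ 2
          + (n * (mS - μ) ^ 2 + N * (mB - μ - δ) ^ 2 + lam * δ ^ 2) := by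
    simp only [sub_sub]
    rw [split YS, split YB]
    ring
  refine ⟨fun lam hlam => ?_, strictAntiOn_weight hnr hNr, weight_zero hnr.ne' hNr.ne',
    tendsto_weight_atTop (by positivity), fun ω hω _ => weight_eq hnr.ne' hNr.ne' ?_⟩
  · obtain ⟨stat_μ, stat_δ⟩ := stationary_weightedMean hnr hNr hlam mS mB
    refine ⟨n * N * (mB - mS) / (n * N + n * lam + N * lam), fun μ δ => ?_⟩
    rw [reduce, reduce]
    exact (add_le_add_iff_left _).mpr
      (criterion_le_of_stationary hnr.le hNr.le hlam stat_μ stat_δ μ δ)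
  · have := (div_lt_iff₀ (by positivity : (0 : ℝ) < n + N)).mp hω
    exact (by linarith : (0 : ℝ) < N * ω - n * (1 - ω)).ne'
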